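/- arXiv:2602.03579 — 2 statements merged into one kernel-verified Lean document; each statement's English description precedes it below -/
import Mathlib

section
/- Let V be a vector space over the field with two elements GF(2), let x : ι → V be a linearly independent family, and let S ⊆ ι. Let W be a set of vectors such that each w ∈ W equals the sum Σ_{i ∈ F_w} x_i over some finite set F_w ⊆ ι for which the number of indices in F_w outside S is even. Then for every m ∉ S, the vector x_m does not lie in the GF(2)-linear span of {x_i : i ∈ S} ∪ W; that is, a client with side-information S decodes no new message from the transmissions W. -/
/-!
Extend the parity functional `x i ↦ [i ∉ S]` from the independent family `x` to a linear
form `g : V → GF(2)`. It vanishes on every `x i` with `i ∈ S` and, since a transmission over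
`F` is sent to `#(F \ S) mod 2`, on every transmission of even unknown support; hence it
vanishes on their span. But `g (x m) = 1` for `m ∉ S`.
-/

open Submodule

theorem LinearIndependent.exists_linearMap_apply_eq {ι K V V' : Type*} [DivisionRing K]
    [AddCommGroup V] [Module K V] [AddCommGroup V'] [Module K V'] {x : ι → V}
    (hx : LinearIndependent K x) (c : ι → V') : ∃ g : V →ₗ[K] V', ∀ i, g (x i) = c i := by
  obtain ⟨g, hg⟩ := LinearMap.exists_extend ((Finsupp.linearCombination K c).comp hx.repr)
  refine ⟨g, fun i => ?_⟩
  have hxi : x i ∈ span K (Set.range x) := subset_span ⟨i, rfl⟩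
  calc g (x i) = Finsupp.linearCombination K c (hx.repr ⟨x i, hxi⟩) := congr($hg ⟨x i, hxi⟩)
    _ = c i := by rw [hx.repr_eq_single i _ rfl, Finsupp.linearCombination_single, one_smul]

theorem AddMonoidHom.map_sum_eq_ncard_diff {ι M R : Type*} [AddCommMonoid M]
    [AddCommMonoidWithOne R] (g : M →+ R) {x : ι → M} {S : Set ι} [DecidablePred (· ∈ S)]
    (hg : ∀ i, g (x i) = if i ∉ S then 1 else 0) (F : Finset ι) :
    g (∑ i ∈ F, x i) = (((F : Set ι) \ S).ncard : R) := by
  rw [map_sum, Finset.sum_congr rfl fun i _ => hg i, Finset.sum_boole, ← Set.ncard_coe_finset,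
    Finset.coe_filter]
  rfl

/-- Let `V` be a vector space over `GF(2)`, let `x : ι → V` be a
linearly independent family, and let `S ⊆ ι`.  Let `W` be a set of vectors such that
each `w ∈ W` equals the sum `Σ_{i ∈ F_w} x i` over some finite set `F_w ⊆ ι` for
which the number of indices in `F_w` outside `S` is even.  Then for every `m ∉ S`,
the vector `x m` does not lie in the `GF(2)`-linear span of `{x i : i ∈ S} ∪ W`;
that is, a client with side-information `S` decodes no new message from the
transmissions `W`. -/
theorem secure_even_parity {ι : Type*} {V : Type*} [AddCommGroup V]
    [Module (ZMod 2) V] (x : ι → V) (hx : LinearIndependent (ZMod 2) x)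
    (S : Set ι) (W : Set V)
    (hW : ∀ w ∈ W, ∃ F : Finset ι,
      w = ∑ i ∈ F, x i ∧ Even (((F : Set ι) \ S).ncard)) :
    ∀ m : ι, m ∉ S → x m ∉ Submodule.span (ZMod 2) (x '' S ∪ W) := by
  classical
  intro m hm hmem
  obtain ⟨g, hg⟩ := hx.exists_linearMap_apply_eq fun i => if i ∉ S then (1 : ZMod 2) else 0
  have hspan : span (ZMod 2) (x '' S ∪ W) ≤ LinearMap.ker g := by
    rw [span_le]
    rintro v (⟨i, hi, rfl⟩ | hv)
    · simp [hg, hi]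
    · obtain ⟨F, rfl, hF⟩ := hW v hv
      rw [SetLike.mem_coe, LinearMap.mem_ker, ← LinearMap.toAddMonoidHom_coe,
        g.toAddMonoidHom.map_sum_eq_ncard_diff hg, ZMod.natCast_eq_zero_iff_even]
      exact hF
  simpa [hg, hm] using hspan hmem
end

section
/- Let V be a vector space over the field with two elements GF(2), let x : ι → V be a linearly independent family, and let S ⊆ ι. Let W be a set of vectors such that each w ∈ W equals x_a + x_b for some a ≠ b with a ∉ S and b ∉ S. Then for every m ∉ S, the vector x_m does not lie in the GF(2)-linear span of {x_i : i ∈ S} ∪ W; that is, a client lacking both messages of every pairwise-XOR transmission decodes nothing new. -/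
open Classical in
/-- Let `V` be a vector space over `GF(2)`, let `x : ι → V` be a
linearly independent family, and let `S ⊆ ι`.  Let `W` be a set of vectors such that
each `w ∈ W` equals `x a + x b` for some `a ≠ b` with `a ∉ S` and `b ∉ S`.  Then for
every `m ∉ S`, the vector `x m` does not lie in the `GF(2)`-linear span of
`{x i : i ∈ S} ∪ W`; that is, a client lacking both messages of every pairwise-XOR
transmission decodes nothing new. -/
theorem secure_pairwise_xor {ι : Type*} {V : Type*} [AddCommGroup V]
    [Module (ZMod 2) V] (x : ι → V) (hx : LinearIndependent (ZMod 2) x)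
    (S : Set ι) (W : Set V)
    (hW : ∀ w ∈ W, ∃ a b : ι, a ≠ b ∧ a ∉ S ∧ b ∉ S ∧ w = x a + x b) :
    ∀ m : ι, m ∉ S → x m ∉ Submodule.span (ZMod 2) (x '' S ∪ W) := by
  intro m hm hmem
  have hs := (linearIndepOn_id_range_iff hx.injective).mpr hx
  let B := Module.Basis.extend hs
  let φ : V →ₗ[ZMod 2] ZMod 2 :=
    B.constr (ZMod 2) (fun j => if ∃ i, i ∉ S ∧ x i = (j : V) then 1 else 0)
  have hφx : ∀ i : ι, φ (x i) = if ∃ i', i' ∉ S ∧ x i' = x i then 1 else 0 := by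
    intro i
    have hxi : x i ∈ hs.extend (Set.subset_univ _) :=
      hs.subset_extend _ ⟨i, rfl⟩
    have : x i = B ⟨x i, hxi⟩ := (Module.Basis.extend_apply_self hs ⟨x i, hxi⟩).symm
    rw [this, Module.Basis.constr_basis]; rw [← this]
  have hφS : ∀ i ∈ S, φ (x i) = 0 := by
    intro i hi
    rw [hφx i, if_neg]
    rintro ⟨i', hi', he⟩
    exact hi' (hx.injective he ▸ hi)
  have hφN : ∀ i ∉ S, φ (x i) = 1 := by
    intro i hi
    rw [hφx i, if_pos ⟨i, hi, rfl⟩]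
  have hker : Submodule.span (ZMod 2) (x '' S ∪ W) ≤ LinearMap.ker φ := by
    rw [Submodule.span_le]
    rintro v (⟨i, hi, rfl⟩ | hv)
    · exact hφS i hi
    · obtain ⟨a, b, _, ha, hb, rfl⟩ := hW v hv
      simp [LinearMap.mem_ker, map_add, hφN a ha, hφN b hb]
      decide
  have := hker hmem
  rw [LinearMap.mem_ker, hφN m hm] at this
  exact one_ne_zero this
end
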